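/- arXiv:2501.10633 — 2 statements merged into one kernel-verified Lean document; each statement's English description precedes it below -/
import Mathlib

section
/- Let G be a graph on n vertices such that for every pair of non-adjacent vertices u, v the sum deg(u) + deg(v) is at least n, and suppose n ≥ 3. Then G is Hamiltonian (Ore's theorem). -/
/-!
Bondy–Chvátal closure. Let `u, v` be vertices with `deg u + deg v ≥ n`. If `G + uv` has a
Hamiltonian cycle, either the cycle avoids `uv` and lives in `G`, or removing `uv` leaves a
Hamiltonian path `u = p₀, …, p_{n-1} = v` of `G`. Among its `n - 1` darts `(pᵢ, pᵢ₊₁)` there are at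
least `deg u` with `u ~ pᵢ₊₁` and at least `deg v` with `pᵢ ~ v`, so by pigeonhole some dart has
both, and `u ⋯ pᵢ v ⋯ pᵢ₊₁ u` is a Hamiltonian cycle of `G`. Since Ore's condition survives adding
edges, downward induction from the complete graph proves the theorem.
-/

open Finset

namespace SimpleGraph

variable {V : Type*} {G : SimpleGraph V} {u v : V}

namespace Walk

lemma IsCycle.snd_eq_or_penultimate_eq {c : G.Walk u u} (hc : c.IsCycle)
    (h : s(u, v) ∈ c.edges) : c.snd = v ∨ c.penultimate = v := by
  rw [← cons_tail_eq c hc.not_nil, edges_cons, List.mem_cons] at h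
  rcases h with h | h
  · exact .inl (Sym2.congr_right.1 h).symm
  · right
    rw [hc.isPath_tail.eq_penultimate_of_mem_edges h]
    simp only [penultimate, getVert_tail]
    have := length_tail_add_one hc.not_nil
    have := hc.three_le_length
    congr 1
    omega

variable [DecidableEq V]

lemma IsHamiltonian.transfer {H : SimpleGraph V} {p : G.Walk u v} (hp : p.IsHamiltonian)
    (hpH : ∀ e ∈ p.edges, e ∈ H.edgeSet) : (p.transfer H hpH).IsHamiltonian := by
  simpa [IsHamiltonian, support_transfer] using hp

/-- The rotated walk is `u ⋯ pᵢ v ⋯ pᵢ₊₁`. -/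
lemma IsHamiltonian.take_append_cons_reverse_drop {p : G.Walk u v}
    (hp : p.IsHamiltonian) {i : ℕ} (hi : i < p.length) (h : G.Adj (p.getVert i) v) :
    ((p.take i).append (cons h (p.drop (i + 1)).reverse)).IsHamiltonian := by
  have hperm : ((p.take i).append (cons h (p.drop (i + 1)).reverse)).support.Perm p.support := by
    rw [support_append, support_cons, List.tail_cons, support_reverse, support_take,
      drop_support_eq_support_drop_min, min_eq_left (by omega)]
    exact (List.reverse_perm _).append_left _ |>.trans (List.take_append_drop _ _ ▸ .refl _)
  intro a
  rw [hperm.count_eq]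
  exact hp a

variable [Fintype V]

lemma IsHamiltonianCycle.reverse {c : G.Walk u u} (hc : c.IsHamiltonianCycle) :
    c.reverse.IsHamiltonianCycle :=
  isHamiltonianCycle_iff_isCycle_and_length_eq.2 ⟨hc.isCycle.reverse, by simp [hc.length_eq]⟩

lemma IsHamiltonianCycle.transfer {H : SimpleGraph V} {c : G.Walk u u}
    (hc : c.IsHamiltonianCycle) (hcH : ∀ e ∈ c.edges, e ∈ H.edgeSet) :
    (c.transfer H hcH).IsHamiltonianCycle :=
  isHamiltonianCycle_iff_isCycle_and_length_eq.2
    ⟨hc.isCycle.transfer hcH, by rw [length_transfer, hc.length_eq]⟩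

lemma IsHamiltonianCycle.exists_isHamiltonian_of_mem_edges {c : G.Walk u u}
    (hc : c.IsHamiltonianCycle) (h : s(u, v) ∈ c.edges) :
    ∃ p : G.Walk v u, p.IsHamiltonian ∧ s(u, v) ∉ p.edges := by
  wlog hsnd : c.snd = v generalizing c
  · refine this hc.reverse (by simpa using h) ?_
    simpa using (hc.isCycle.snd_eq_or_penultimate_eq h).resolve_left hsnd
  subst hsnd
  have hcons := (cons_tail_eq c hc.not_nil).symm ▸ hc.isCycle
  exact ⟨c.tail, hc.isHamiltonian_tail, ((cons_isCycle_iff _ _).1 hcons).2⟩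

lemma IsHamiltonian.isHamiltonianCycle_cons {p : G.Walk u v} (hp : p.IsHamiltonian)
    (h : G.Adj v u) (hn : 3 ≤ Fintype.card V) : (cons h p).IsHamiltonianCycle := by
  refine isHamiltonianCycle_iff_isCycle_and_length_eq.2
    ⟨(cons_isCycle_iff p h).2 ⟨hp.isPath, fun hvu => ?_⟩, ?_⟩
  · have := hp.isPath.length_eq_one_of_mem_edges (Sym2.eq_swap ▸ hvu)
    have := hp.length_eq
    omega
  · rw [length_cons, hp.length_eq]
    omega

lemma IsHamiltonian.exists_adj_getVert_succ_and_getVert_adj [DecidableRel G.Adj]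
    {p : G.Walk u v} (hp : p.IsHamiltonian)
    (hdeg : Fintype.card V ≤ G.degree u + G.degree v) :
    ∃ i < p.length, G.Adj u (p.getVert (i + 1)) ∧ G.Adj (p.getVert i) v := by
  have hu : G.degree u ≤ #{i ∈ range p.length | G.Adj u (p.getVert (i + 1))} := by
    refine card_le_card_of_surjOn (fun i => p.getVert (i + 1)) fun w hw => ?_
    rw [mem_coe, mem_neighborFinset] at hw
    obtain ⟨j, rfl, hj⟩ := mem_support_iff_exists_getVert.1 (hp.mem_support w)
    have hj0 : j ≠ 0 := by
      rintro rfl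
      simp at hw
    obtain ⟨i, rfl⟩ := Nat.exists_eq_add_one_of_ne_zero hj0
    exact ⟨i, by simpa using ⟨by omega, hw⟩, rfl⟩
  have hv : G.degree v ≤ #{i ∈ range p.length | G.Adj (p.getVert i) v} := by
    refine card_le_card_of_surjOn p.getVert fun w hw => ?_
    rw [mem_coe, mem_neighborFinset] at hw
    obtain ⟨j, rfl, hj⟩ := mem_support_iff_exists_getVert.1 (hp.mem_support w)
    have hjv : j ≠ p.length := by
      rintro rfl
      simp at hw
    exact ⟨j, by simpa using ⟨by omega, hw.symm⟩, rfl⟩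
  have hlen : #(range p.length) < Fintype.card V := by
    rw [card_range, hp.length_eq]
    exact Nat.sub_lt (Fintype.card_pos_iff.2 ⟨u⟩) zero_lt_one
  obtain ⟨i, hi⟩ := inter_nonempty_of_card_lt_card_add_card
    (filter_subset (fun i => G.Adj u (p.getVert (i + 1))) (range p.length))
    (filter_subset (fun i => G.Adj (p.getVert i) v) _) (by omega)
  simp only [mem_inter, mem_filter, mem_range] at hi
  exact ⟨i, hi.1.1, hi.1.2, hi.2.2⟩

end Walk

lemma mem_edgeSet_of_mem_edges_sup_edge {x y : V} {p : (G ⊔ edge u v).Walk x y}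
    (hp : s(u, v) ∉ p.edges) {e : Sym2 V} (he : e ∈ p.edges) : e ∈ G.edgeSet := by
  have := p.edges_subset_edgeSet he
  rw [edgeSet_sup, edgeSet_edge] at this
  rcases this with h | ⟨h, -⟩
  · exact h
  · exact absurd (Set.mem_singleton_iff.1 h ▸ he) hp

variable [Fintype V]

def OreCondition (G : SimpleGraph V) [DecidableRel G.Adj] : Prop :=
  ∀ u v, u ≠ v → ¬G.Adj u v → Fintype.card V ≤ G.degree u + G.degree v

lemma OreCondition.mono {H : SimpleGraph V} [DecidableRel G.Adj] [DecidableRel H.Adj]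
    (hGH : G ≤ H) (hG : G.OreCondition) : H.OreCondition := fun u v huv hnadj =>
  (hG u v huv fun h => hnadj (hGH h)).trans
    (add_le_add (degree_le_of_le hGH) (degree_le_of_le hGH))

variable [DecidableEq V]

lemma isHamiltonian_top (hn : 3 ≤ Fintype.card V) : (⊤ : SimpleGraph V).IsHamiltonian :=
  fun _ => by
    obtain ⟨a, c, hc, hlen⟩ := (cycleGraph_isContained_iff hn).1
      (isContained_top_iff.2 ⟨(Fintype.equivFin V).symm.toEmbedding⟩)
    exact ⟨a, c, Walk.isHamiltonianCycle_iff_isCycle_and_length_eq.2 ⟨hc, hlen⟩⟩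

variable [DecidableRel G.Adj]

lemma IsHamiltonian.of_walk_of_card_le_degree_add_degree {p : G.Walk u v}
    (hp : p.IsHamiltonian) (hn : 3 ≤ Fintype.card V)
    (hdeg : Fintype.card V ≤ G.degree u + G.degree v) : G.IsHamiltonian := by
  obtain ⟨i, hi, hu, hv⟩ := hp.exists_adj_getVert_succ_and_getVert_adj hdeg
  exact fun _ =>
    ⟨_, _, (hp.take_append_cons_reverse_drop hi hv).isHamiltonianCycle_cons hu.symm hn⟩

lemma IsHamiltonian.of_sup_edge (hn : 3 ≤ Fintype.card V)
    (hdeg : Fintype.card V ≤ G.degree u + G.degree v) (h : (G ⊔ edge u v).IsHamiltonian) :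
    G.IsHamiltonian := by
  have : Nontrivial V := Fintype.one_lt_card_iff_nontrivial.1 (by omega)
  obtain ⟨c, hc⟩ := h.exists_isHamiltonianCycle u
  by_cases huv : s(u, v) ∈ c.edges
  · obtain ⟨p, hp, hpuv⟩ := hc.exists_isHamiltonian_of_mem_edges huv
    exact IsHamiltonian.of_walk_of_card_le_degree_add_degree
      (hp.transfer fun _ => mem_edgeSet_of_mem_edges_sup_edge hpuv) hn (by omega)
  · exact fun _ => ⟨u, _, hc.transfer fun _ => mem_edgeSet_of_mem_edges_sup_edge huv⟩

end SimpleGraph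

theorem stmt_5 {V : Type*} [Fintype V] [DecidableEq V]
    (G : SimpleGraph V) [DecidableRel G.Adj]
    (hn : 3 ≤ Fintype.card V)
    (hOre : ∀ u v : V, u ≠ v → ¬ G.Adj u v →
      Fintype.card V ≤ G.degree u + G.degree v) :
    G.IsHamiltonian := by
  suffices ∀ (H : SimpleGraph V) [DecidableRel H.Adj], H.OreCondition → H.IsHamiltonian from
    this G hOre
  intro H
  induction H using WellFoundedGT.induction with
  | _ H ih =>
    intro _ hOre
    by_cases hH : H = ⊤
    · subst hH
      exact SimpleGraph.isHamiltonian_top hn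
    obtain ⟨u, v, huv, hadj⟩ : ∃ u v, u ≠ v ∧ ¬H.Adj u v := by
      contrapose! hH
      ext u v
      exact ⟨H.ne_of_adj, hH u v⟩
    have hlt := SimpleGraph.lt_sup_edge H u v huv hadj
    exact (ih _ hlt (hOre.mono hlt.le)).of_sup_edge hn (hOre u v huv hadj)
end

section
/- Let P = v₁v₂…v_h be a path in a graph G such that neither v₁ nor v_h has a neighbor outside V(P). If both v₁v_{i+1} and v_i v_h are edges of G for some i, and G is connected with h < |V(G)|, then G contains a path on h + 1 vertices. -/
/-!
The edges `v₁v_{i+1}` and `v_iv_h` close `P` into the cycle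
`v₁ … v_i v_h v_{h-1} … v_{i+1} v₁` through all `h` vertices of `P`. As `G` is connected and has a
vertex outside `P`, some edge leaves this cycle, and opening the cycle along that edge gives a path
on `h + 1` vertices.
-/

open List

namespace List

variable {α : Type*} {r : α → α → Prop}

theorem IsChain.cycleChain_append_reverse [Std.Symm r] {a b : List α}
    (hab : IsChain r (a ++ b)) (ha : a ≠ []) (hb : b ≠ [])
    (hlast : r (a.getLast ha) (b.getLast hb)) (hhead : r (a.head ha) (b.head hb)) :
    Cycle.Chain r (a ++ b.reverse : Cycle α) := by
  obtain ⟨hca, hcb, -⟩ := isChain_append.1 hab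
  have hne : a ++ b.reverse ≠ [] := by simp [ha]
  rw [Cycle.chain_ne_nil r hne, getLast_append_of_ne_nil hne (by simpa using hb),
    getLast_reverse, ← cons_append, isChain_append]
  refine ⟨?_, isChain_reverse.2 (hcb.imp fun _ _ h ↦ symm h), ?_⟩
  · rw [← cons_head_tail ha] at hca ⊢
    exact hca.cons_cons (symm hhead)
  · intro x hx y hy
    rw [getLast?_cons, getLast?_eq_some_getLast ha] at hx
    rw [head?_reverse, getLast?_eq_some_getLast hb] at hy
    cases hx; cases hy
    exact hlast

theorem exists_isChain_nodup_length_succ_of_cycleChain {l : List α}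
    (hl : Cycle.Chain r (l : Cycle α)) (hnd : l.Nodup) {x y : α} (hx : x ∈ l) (hy : y ∉ l)
    (hyx : r y x) : ∃ l' : List α, IsChain r l' ∧ l'.Nodup ∧ l'.length = l.length + 1 := by
  obtain ⟨n, hn, rfl⟩ := getElem_of_mem hx
  obtain ⟨t, ht⟩ := head?_eq_some_iff.1 (by rw [head?_rotate hn, getElem?_eq_getElem hn])
  have hrot : (l : Cycle α) = (l[n] :: t : List α) := Cycle.coe_eq_coe.2 ⟨n, ht⟩
  rw [hrot, Cycle.chain_coe_cons, ← cons_append, isChain_append] at hl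
  refine ⟨y :: l[n] :: t, hl.1.cons_cons hyx, ?_, ?_⟩
  · rw [← ht, nodup_cons, mem_rotate, nodup_rotate]
    exact ⟨hy, hnd⟩
  · rw [← ht, length_cons, length_rotate]

end List

theorem SimpleGraph.Preconnected.exists_adj_of_mem_of_notMem {V : Type*} {G : SimpleGraph V}
    (hG : G.Preconnected) {s : Set V} {u v : V} (hu : u ∈ s) (hv : v ∉ s) :
    ∃ x ∈ s, ∃ y ∉ s, G.Adj x y := by
  obtain ⟨p⟩ := hG u v
  obtain ⟨d, -, hd₁, hd₂⟩ := p.exists_boundary_dart s hu hv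
  exact ⟨d.fst, hd₁, d.snd, hd₂, d.adj⟩

theorem stmt_7_general {V : Type*} [Fintype V]
    (G : SimpleGraph V) (hconn : G.Connected)
    (l : List V) (hne : l ≠ []) (h : ℕ) (hlen : l.length = h)
    (hchain : l.Chain' G.Adj) (hnodup : l.Nodup)
    (i : ℕ) (hi1 : i + 1 < l.length) (hi0 : i < l.length)
    (hadj1 : G.Adj (l.head hne) (l[i+1]'hi1))
    (hadj2 : G.Adj (l[i]'hi0) (l.getLast hne))
    (hh : h < Fintype.card V) :
    ∃ l' : List V, l'.Chain' G.Adj ∧ l'.Nodup ∧ l'.length = h + 1 := by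
  obtain ⟨v, hv⟩ := Cardinal.exists_notMem_of_length_lt l (by simpa [hlen] using hh)
  obtain ⟨x, hx, y, hy, hxy⟩ :=
    hconn.preconnected.exists_adj_of_mem_of_notMem (s := {w | w ∈ l}) (head_mem hne) hv
  have ha : l.take (i + 1) ≠ [] := by simpa using hne
  have hb : l.drop (i + 1) ≠ [] := by simpa using hi1
  have hcyc : Cycle.Chain G.Adj (l.take (i + 1) ++ (l.drop (i + 1)).reverse : Cycle V) := by
    have : Std.Symm G.Adj := G.symm
    refine (take_append_drop (i + 1) l ▸ hchain).cycleChain_append_reverse ha hb ?_ ?_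
    · simpa [getLast_take, getLast_drop, getElem?_eq_getElem hi0] using hadj2
    · simpa [head_take, head_drop] using hadj1
  have hperm : (l.take (i + 1) ++ (l.drop (i + 1)).reverse).Perm l :=
    ((reverse_perm _).append_left _).trans (by rw [take_append_drop])
  obtain ⟨l', hl'chain, hl'nodup, hl'len⟩ := exists_isChain_nodup_length_succ_of_cycleChain hcyc
    (hperm.nodup_iff.2 hnodup) (hperm.mem_iff.2 hx) (mt hperm.mem_iff.1 hy) hxy.symm
  exact ⟨l', hl'chain, hl'nodup, by rw [hl'len, hperm.length_eq, hlen]⟩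

theorem stmt_7 {V : Type*} [Fintype V] [DecidableEq V]
    (G : SimpleGraph V) (hconn : G.Connected)
    (l : List V) (hne : l ≠ []) (h : ℕ) (hlen : l.length = h)
    (hchain : l.Chain' G.Adj) (hnodup : l.Nodup)
    (hhead : ∀ w : V, G.Adj (l.head hne) w → w ∈ l)
    (hlast : ∀ w : V, G.Adj (l.getLast hne) w → w ∈ l)
    (i : ℕ) (hi1 : i + 1 < l.length) (hi0 : i < l.length)
    (hadj1 : G.Adj (l.head hne) (l[i+1]'hi1))
    (hadj2 : G.Adj (l[i]'hi0) (l.getLast hne))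
    (hh : h < Fintype.card V) :
    ∃ l' : List V, l'.Chain' G.Adj ∧ l'.Nodup ∧ l'.length = h + 1 :=
  stmt_7_general G hconn l hne h hlen hchain hnodup i hi1 hi0 hadj1 hadj2 hh
end
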